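/- Pointwise bias of the Nadaraya–Watson kernel regressor: let K : ℝ^d → ℝ be a kernel satisfying ∫ K(u) du = 1, ∫ u K(u) du = 0, ∫ u uᵀ K(u) du = μ₂ I_d for some μ₂ ∈ (0, ∞), and ∫ ‖u‖³ |K(u)| du < ∞. Let p : ℝ^d → ℝ be a probability density and m : ℝ^d → ℝ a regression function, both three-times continuously differentiable with bounded derivatives up to order 3, and fix x ∈ ℝ^d with p(x) > 0. Then lim_{h → 0⁺} h^{−2} ( ∫ K(t) m(x − h t) p(x − h t) dt / ∫ K(t) p(x − h t) dt − m(x) ) = (μ₂/2) ( Δm(x) + 2 ⟨∇m(x), ∇p(x)⟩ / p(x) ); i.e., the leading bias of the Nadaraya–Watson estimator at x is (h² μ₂ / 2)( Δm(x) + 2 ∇m(x)·∇ log p(x) ) + o(h²). -/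

import Mathlib

/-!
For a `C³` function `f` with bounded third derivative, Taylor's formula with a cubic remainder
integrated against the kernel gives `∫ K(t) f(x - h t) dt = f(x) + (μ₂/2) h² Δf(x) + O(h³)`:
the constant, linear and Hessian terms are integrated by the moment conditions
`∫ K = 1`, `∫ u K(u) du = 0` and `∫ u uᵀ K(u) du = μ₂ I`, and the remainder by the third
absolute moment. Applied to `f = m p` and `f = p`, together with
`Δ(m p) = m Δp + 2 ⟨∇m, ∇p⟩ + p Δm`, this makes the numerator minus `m(x)` times the
denominator equal to `(μ₂/2) h² (p Δm + 2 ⟨∇m, ∇p⟩)(x) + O(h³)`, while the denominator tends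
to `p(x) > 0`.
-/

open MeasureTheory Filter BigOperators

/-- The Laplacian of `f : ℝ^d → ℝ`, as the sum of second derivatives along the
standard coordinate directions. -/
noncomputable def lapl {d : ℕ} (f : EuclideanSpace ℝ (Fin d) → ℝ)
    (x : EuclideanSpace ℝ (Fin d)) : ℝ :=
  ∑ i, fderiv ℝ (fun y => fderiv ℝ f y (EuclideanSpace.single i 1)) x
      (EuclideanSpace.single i 1)

open Asymptotics Topology

section Taylor

variable {E F : Type*} [NormedAddCommGroup E] [NormedSpace ℝ E]
  [NormedAddCommGroup F] [NormedSpace ℝ F]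

theorem norm_sub_le_of_forall_hasFDerivAt_le_pow {f : E → F} {f' : E → E →L[ℝ] F}
    {x : E} {C : ℝ} {n : ℕ} (hf : ∀ z, HasFDerivAt f (f' z) z)
    (hb : ∀ z, ‖f' z‖ ≤ C * ‖z - x‖ ^ n) (v : E) :
    ‖f (x + v) - f x‖ ≤ C * ‖v‖ ^ (n + 1) := by
  rcases eq_or_ne v 0 with rfl | hv
  · simp
  have hC : 0 ≤ C := by
    refine nonneg_of_mul_nonneg_left ?_ (pow_pos (norm_pos_iff.2 hv) n)
    simpa using (norm_nonneg _).trans (hb (x + v))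
  have hseg : ∀ z ∈ segment ℝ x (x + v), ‖f' z‖ ≤ C * ‖v‖ ^ n := fun z hz =>
    (hb z).trans <| by
      gcongr
      simpa using norm_sub_le_of_mem_segment hz
  have := (convex_segment x (x + v)).norm_image_sub_le_of_norm_hasFDerivWithin_le
    (fun z _ => (hf z).hasFDerivWithinAt) hseg (left_mem_segment ℝ x (x + v))
    (right_mem_segment ℝ x (x + v))
  simpa [pow_succ, mul_assoc] using this

theorem norm_sub_sub_fderiv_apply_le {f : E → F} (hf : ContDiff ℝ 2 f) {C : ℝ}
    (hC : ∀ y, ‖iteratedFDeriv ℝ 2 f y‖ ≤ C) (x v : E) :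
    ‖f (x + v) - f x - fderiv ℝ f x v‖ ≤ C * ‖v‖ ^ 2 := by
  have hdf : Differentiable ℝ f := hf.differentiable (by norm_num)
  have hdf' : Differentiable ℝ (fderiv ℝ f) :=
    (hf.fderiv_right (m := 1) (by norm_num)).differentiable one_ne_zero
  have hlip : ∀ z, ‖fderiv ℝ f z - fderiv ℝ f x‖ ≤ C * ‖z - x‖ ^ 1 := fun z => by
    simpa using norm_sub_le_of_forall_hasFDerivAt_le_pow (n := 0) (x := x)
      (fun y => (hdf' y).hasFDerivAt)
      (fun y => by simpa [← norm_iteratedFDeriv_fderiv] using hC y) (z - x)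
  have hg : ∀ z, HasFDerivAt (fun y => f y - fderiv ℝ f x (y - x))
      (fderiv ℝ f z - fderiv ℝ f x) z := fun z =>
    (hdf z).hasFDerivAt.sub (by simpa using (fderiv ℝ f x).hasFDerivAt (x := z))
  have := norm_sub_le_of_forall_hasFDerivAt_le_pow hg hlip v
  simpa [sub_right_comm] using this

theorem hasFDerivAt_half_apply_sub_apply_sub {B : E →L[ℝ] E →L[ℝ] F}
    (hB : ∀ u w, B u w = B w u) (x y : E) :
    HasFDerivAt (fun z => (2:ℝ)⁻¹ • B (z - x) (z - x)) (B (y - x)) y := by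
  have hsub : HasFDerivAt (fun z : E => z - x) (ContinuousLinearMap.id ℝ E) y :=
    (hasFDerivAt_id y).sub_const x
  have hB' : HasFDerivAt (fun z => B (z - x)) B y := by
    simpa using B.hasFDerivAt (x := y)
  refine ((hB'.clm_apply hsub).const_smul (2:ℝ)⁻¹).congr_fderiv ?_
  ext w
  simp only [FunLike.coe_smul, FunLike.coe_add, Pi.smul_apply, Pi.add_apply,
    ContinuousLinearMap.coe_comp, ContinuousLinearMap.coe_id', Function.comp_apply, id_eq,
    ContinuousLinearMap.flip_apply, hB w (y - x)]
  module

theorem norm_sub_sub_fderiv_apply_sub_fderiv_fderiv_apply_le {f : E → F} (hf : ContDiff ℝ 3 f)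
    {C : ℝ} (hC : ∀ y, ‖iteratedFDeriv ℝ 3 f y‖ ≤ C) (x v : E) :
    ‖f (x + v) - f x - fderiv ℝ f x v - (2:ℝ)⁻¹ • fderiv ℝ (fderiv ℝ f) x v v‖ ≤ C * ‖v‖ ^ 3 := by
  set D2 := fderiv ℝ (fderiv ℝ f) x
  have hdf : Differentiable ℝ f := hf.differentiable (by norm_num)
  have hf' : ContDiff ℝ 2 (fderiv ℝ f) := hf.fderiv_right (by norm_num)
  have hD2 : ∀ u w, D2 u w = D2 w u := second_derivative_symmetric
    (fun y => (hdf y).hasFDerivAt) ((hf'.differentiable (by norm_num)) x).hasFDerivAt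
  have hψ : ∀ z, HasFDerivAt
      (fun y => f y - fderiv ℝ f x (y - x) - (2:ℝ)⁻¹ • D2 (y - x) (y - x))
      (fderiv ℝ f z - fderiv ℝ f x - D2 (z - x)) z := fun z =>
    ((hdf z).hasFDerivAt.sub (by simpa using (fderiv ℝ f x).hasFDerivAt (x := z))).sub
      (hasFDerivAt_half_apply_sub_apply_sub hD2 x z)
  have hψ' : ∀ z, ‖fderiv ℝ f z - fderiv ℝ f x - D2 (z - x)‖ ≤ C * ‖z - x‖ ^ 2 := fun z => by
    simpa using norm_sub_sub_fderiv_apply_le hf'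
      (fun y => (norm_iteratedFDeriv_fderiv).trans_le (hC y)) x (z - x)
  have := norm_sub_le_of_forall_hasFDerivAt_le_pow hψ hψ' v
  simpa [sub_right_comm] using this

end Taylor

section Moments

variable {E : Type*} [NormedAddCommGroup E] [MeasurableSpace E] {μ : Measure E} {K : E → ℝ}

theorem integrable_norm_pow_mul_abs_of_le [OpensMeasurableSpace E] (hK : Integrable K μ)
    {n k : ℕ} (hKn : Integrable (fun u => ‖u‖ ^ n * |K u|) μ) (hk : k ≤ n) :
    Integrable (fun u => ‖u‖ ^ k * |K u|) μ := by
  refine (hK.abs.add hKn).mono'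
    ((continuous_norm.pow k).aestronglyMeasurable.mul hK.abs.aestronglyMeasurable)
    (ae_of_all _ fun u => ?_)
  have hpow : ‖u‖ ^ k ≤ 1 + ‖u‖ ^ n := by
    rcases le_total ‖u‖ 1 with hu | hu
    · linarith [pow_le_one₀ (norm_nonneg u) hu (n := k), pow_nonneg (norm_nonneg u) n]
    · linarith [pow_le_pow_right₀ hu hk]
  rw [Real.norm_eq_abs, abs_of_nonneg (by positivity), Pi.add_apply]
  nlinarith [abs_nonneg (K u)]

theorem integrable_smul_of_norm_le_mul_norm_pow {F : Type*} [NormedAddCommGroup F]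
    [NormedSpace ℝ F] {n : ℕ} (hKn : Integrable (fun u => ‖u‖ ^ n * |K u|) μ)
    (hK : AEStronglyMeasurable K μ) {φ : E → F} (hφ : AEStronglyMeasurable φ μ) {C : ℝ}
    (hb : ∀ u, ‖φ u‖ ≤ C * ‖u‖ ^ n) :
    Integrable (fun u => K u • φ u) μ := by
  refine (hKn.const_mul |C|).mono' (hK.smul hφ) (ae_of_all _ fun u => ?_)
  rw [norm_smul, Real.norm_eq_abs]
  calc |K u| * ‖φ u‖ ≤ |K u| * (|C| * ‖u‖ ^ n) :=
        mul_le_mul_of_nonneg_left ((hb u).trans (by gcongr; exact le_abs_self C)) (abs_nonneg _)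
    _ = |C| * (‖u‖ ^ n * |K u|) := by ring

end Moments

theorem exists_bound_iteratedFDeriv_mul {E A : Type*} [NormedAddCommGroup E] [NormedSpace ℝ E]
    [NormedRing A] [NormedAlgebra ℝ A] {f g : E → A} {N : ℕ} (hf : ContDiff ℝ N f)
    (hg : ContDiff ℝ N g) (hfb : ∀ n ≤ N, ∃ C, ∀ y, ‖iteratedFDeriv ℝ n f y‖ ≤ C)
    (hgb : ∀ n ≤ N, ∃ C, ∀ y, ‖iteratedFDeriv ℝ n g y‖ ≤ C) :
    ∃ C, ∀ y, ‖iteratedFDeriv ℝ N (fun y => f y * g y) y‖ ≤ C := by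
  choose! Cf hCf using hfb
  choose! Cg hCg using hgb
  refine ⟨∑ i ∈ Finset.range (N + 1), (N.choose i : ℝ) * Cf i * Cg (N - i), fun y => ?_⟩
  refine (norm_iteratedFDeriv_mul_le hf hg y le_rfl).trans (Finset.sum_le_sum fun i hi => ?_)
  have hiN : i ≤ N := Nat.lt_succ_iff.mp (Finset.mem_range.mp hi)
  have hfi := hCf i hiN y
  gcongr
  · exact mul_nonneg (Nat.cast_nonneg _) ((norm_nonneg _).trans hfi)
  · exact hCg (N - i) (Nat.sub_le N i) y

theorem tendsto_div_sub_div_sq_of_isBigO {N B : ℝ → ℝ} {n₀ b₀ a b c : ℝ}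
    (hN : (fun h => N h - (n₀ + h ^ 2 * a)) =O[𝓝 0] fun h => h ^ 3)
    (hB : (fun h => B h - (b₀ + h ^ 2 * b)) =O[𝓝 0] fun h => h ^ 3)
    (hb₀ : b₀ ≠ 0) (hc : n₀ = c * b₀) :
    Tendsto (fun h => (N h / B h - c) / h ^ 2) (𝓝[≠] 0) (𝓝 ((a - c * b) / b₀)) := by
  have hcube : Tendsto (fun h : ℝ => h ^ 3) (𝓝 0) (𝓝 0) := by
    simpa using (continuous_pow 3).tendsto (0 : ℝ)
  have hB0 : Tendsto B (𝓝[≠] 0) (𝓝 b₀) := by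
    have hpoly : Tendsto (fun h : ℝ => b₀ + h ^ 2 * b) (𝓝 0) (𝓝 b₀) :=
      (by fun_prop : Continuous fun h : ℝ => b₀ + h ^ 2 * b).tendsto' 0 b₀ (by simp)
    simpa using ((hB.trans_tendsto hcube).add hpoly).mono_left nhdsWithin_le_nhds
  have hE : (fun h => (N h - c * B h - h ^ 2 * (a - c * b)) / h ^ 2) =O[𝓝[≠] 0] fun h => h := by
    have h1 : (fun h => N h - c * B h - h ^ 2 * (a - c * b)) =O[𝓝 0] fun h => h ^ 3 :=
      (hN.sub (hB.const_mul_left c)).congr_left fun h => by rw [hc]; ring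
    refine ((h1.mono nhdsWithin_le_nhds).mul (isBigO_refl (fun h : ℝ => (h ^ 2)⁻¹) _)).congr'
      (Eventually.of_forall fun h => rfl) ?_
    filter_upwards [self_mem_nhdsWithin] with h (hh : h ≠ 0)
    field_simp
  have hD : Tendsto (fun h => (N h - c * B h) / h ^ 2) (𝓝[≠] 0) (𝓝 (a - c * b)) := by
    have := (hE.trans_tendsto (tendsto_id.mono_left nhdsWithin_le_nhds)).add_const (a - c * b)
    refine (by simpa using this : Tendsto _ _ _).congr' ?_
    filter_upwards [self_mem_nhdsWithin] with h (hh : h ≠ 0)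
    field_simp
    ring
  refine (hD.div hB0 hb₀).congr' ?_
  filter_upwards [self_mem_nhdsWithin, hB0.eventually_ne hb₀] with h (hh : h ≠ 0) hBh
  simp only [Pi.div_apply]
  field_simp

section Euclidean

variable {d : ℕ}

theorem lapl_eq_sum_fderiv_fderiv {f : EuclideanSpace ℝ (Fin d) → ℝ}
    {x : EuclideanSpace ℝ (Fin d)} (hf : DifferentiableAt ℝ (fderiv ℝ f) x) :
    lapl f x = ∑ i, fderiv ℝ (fderiv ℝ f) x (EuclideanSpace.single i 1)
      (EuclideanSpace.single i 1) := by
  refine Finset.sum_congr rfl fun i _ => ?_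
  rw [fderiv_clm_apply hf (differentiableAt_const _)]
  simp

theorem inner_gradient_eq_sum (f g : EuclideanSpace ℝ (Fin d) → ℝ)
    (x : EuclideanSpace ℝ (Fin d)) :
    inner ℝ (gradient f x) (gradient g x) = ∑ i, fderiv ℝ f x (EuclideanSpace.single i 1) *
      fderiv ℝ g x (EuclideanSpace.single i 1) := by
  rw [← (EuclideanSpace.basisFun (Fin d) ℝ).sum_inner_mul_inner]
  refine Finset.sum_congr rfl fun i _ => ?_
  rw [real_inner_comm (gradient g x), EuclideanSpace.basisFun_apply, gradient,
    gradient, InnerProductSpace.toDual_symm_apply, InnerProductSpace.toDual_symm_apply]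

theorem lapl_mul {f g : EuclideanSpace ℝ (Fin d) → ℝ} (hf : ContDiff ℝ 2 f)
    (hg : ContDiff ℝ 2 g) (x : EuclideanSpace ℝ (Fin d)) :
    lapl (fun y => f y * g y) x =
      f x * lapl g x + 2 * inner ℝ (gradient f x) (gradient g x) + g x * lapl f x := by
  have hf1 : Differentiable ℝ f := hf.differentiable (by norm_num)
  have hg1 : Differentiable ℝ g := hg.differentiable (by norm_num)
  have hf2 : Differentiable ℝ (fderiv ℝ f) :=
    (hf.fderiv_right (m := 1) (by norm_num)).differentiable one_ne_zero
  have hg2 : Differentiable ℝ (fderiv ℝ g) :=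
    (hg.fderiv_right (m := 1) (by norm_num)).differentiable one_ne_zero
  have hD : fderiv ℝ (fun y => f y * g y) = fun y => f y • fderiv ℝ g y + g y • fderiv ℝ f y :=
    funext fun y => fderiv_mul (hf1 y) (hg1 y)
  have hD2 : HasFDerivAt (fderiv ℝ (fun y => f y * g y))
      ((f x • fderiv ℝ (fderiv ℝ g) x + (fderiv ℝ f x).smulRight (fderiv ℝ g x)) +
        (g x • fderiv ℝ (fderiv ℝ f) x + (fderiv ℝ g x).smulRight (fderiv ℝ f x))) x := by
    rw [hD]
    exact ((hf1 x).hasFDerivAt.smul (hg2 x).hasFDerivAt).add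
      ((hg1 x).hasFDerivAt.smul (hf2 x).hasFDerivAt)
  rw [lapl_eq_sum_fderiv_fderiv hD2.differentiableAt, hD2.fderiv,
    lapl_eq_sum_fderiv_fderiv (hf2 x), lapl_eq_sum_fderiv_fderiv (hg2 x), inner_gradient_eq_sum,
    Finset.mul_sum, Finset.mul_sum, Finset.mul_sum, ← Finset.sum_add_distrib,
    ← Finset.sum_add_distrib]
  refine Finset.sum_congr rfl fun i _ => ?_
  simp only [add_apply, smul_apply, ContinuousLinearMap.smulRight_apply, smul_eq_mul]
  ring

theorem integral_mul_apply_apply_self {K : EuclideanSpace ℝ (Fin d) → ℝ} {μ2 : ℝ}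
    (hK : AEStronglyMeasurable K) (hK2 : Integrable fun u => ‖u‖ ^ 2 * |K u|)
    (hKiso : ∀ i j, ∫ u : EuclideanSpace ℝ (Fin d), u i * u j * K u = if i = j then μ2 else 0)
    (B : EuclideanSpace ℝ (Fin d) →L[ℝ] EuclideanSpace ℝ (Fin d) →L[ℝ] ℝ) :
    ∫ u, K u * B u u = μ2 * ∑ i, B (EuclideanSpace.single i 1) (EuclideanSpace.single i 1) := by
  set e : Fin d → EuclideanSpace ℝ (Fin d) := fun i => EuclideanSpace.single i 1
  have hcoord : ∀ i j, Integrable fun u : EuclideanSpace ℝ (Fin d) => u i * u j * K u := by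
    intro i j
    have := integrable_smul_of_norm_le_mul_norm_pow hK2 hK
      (by fun_prop : Continuous fun u : EuclideanSpace ℝ (Fin d) => u i * u j).aestronglyMeasurable
      (C := 1) fun u => by
        rw [norm_mul, one_mul, sq]
        exact mul_le_mul (PiLp.norm_apply_le u i) (PiLp.norm_apply_le u j) (norm_nonneg _)
          (norm_nonneg _)
    simpa [mul_comm] using this
  have hexpand : ∀ u : EuclideanSpace ℝ (Fin d),
      K u * B u u = ∑ i, ∑ j, B (e i) (e j) * (u i * u j * K u) := by
    intro u
    have hu : ∑ i, u i • e i = u := by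
      simpa using (EuclideanSpace.basisFun (Fin d) ℝ).sum_repr u
    have hB : B u u = B (∑ i, u i • e i) (∑ j, u j • e j) := by rw [hu]
    rw [hB]
    simp only [map_sum, map_smul, sum_apply, smul_apply, smul_eq_mul, Finset.mul_sum]
    rw [Finset.sum_comm]
    exact Finset.sum_congr rfl fun i _ => Finset.sum_congr rfl fun j _ => by ring
  calc ∫ u, K u * B u u = ∫ u, ∑ i, ∑ j, B (e i) (e j) * (u i * u j * K u) :=
        integral_congr_ae (ae_of_all _ hexpand)
    _ = ∑ i, ∑ j, B (e i) (e j) * ∫ u, u i * u j * K u := by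
        rw [integral_finsetSum _ fun i _ =>
          integrable_finsetSum _ fun j _ => (hcoord i j).const_mul _]
        refine Finset.sum_congr rfl fun i _ => ?_
        rw [integral_finsetSum _ fun j _ => (hcoord i j).const_mul _]
        simp only [integral_const_mul]
    _ = μ2 * ∑ i, B (e i) (e i) := by
        simp only [hKiso, mul_ite, mul_zero, Finset.sum_ite_eq, Finset.mem_univ, if_true,
          Finset.mul_sum]
        exact Finset.sum_congr rfl fun i _ => mul_comm _ _

/-- For `h > 0` this is `∫ K_h(x - z) f(z) dz`; the population Nadaraya–Watson prediction is
`kernelSmoothing K (m * p) x h / kernelSmoothing K p x h`. -/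
noncomputable def kernelSmoothing (K f : EuclideanSpace ℝ (Fin d) → ℝ)
    (x : EuclideanSpace ℝ (Fin d)) (h : ℝ) : ℝ :=
  ∫ t, K t * f (x - h • t)

theorem isBigO_kernelSmoothing_sub_lapl {K : EuclideanSpace ℝ (Fin d) → ℝ} {μ2 : ℝ}
    (hK : Integrable K) (hK1 : ∫ u, K u = 1) (hKsym : ∫ u, K u • u = 0)
    (hKiso : ∀ i j, ∫ u : EuclideanSpace ℝ (Fin d), u i * u j * K u = if i = j then μ2 else 0)
    (hK3 : Integrable fun u : EuclideanSpace ℝ (Fin d) => ‖u‖ ^ 3 * |K u|)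
    {f : EuclideanSpace ℝ (Fin d) → ℝ} (hf : ContDiff ℝ 3 f) {C : ℝ}
    (hC : ∀ y, ‖iteratedFDeriv ℝ 3 f y‖ ≤ C) (x : EuclideanSpace ℝ (Fin d)) :
    (fun h => kernelSmoothing K f x h - (f x + h ^ 2 * (μ2 / 2 * lapl f x))) =O[𝓝 0]
      fun h => h ^ 3 := by
  set Df := fderiv ℝ f x
  set D2 := fderiv ℝ (fderiv ℝ f) x
  have hKmeas := hK.aestronglyMeasurable
  have hKmom1 := integrable_norm_pow_mul_abs_of_le hK hK3 (by norm_num : 1 ≤ 3)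
  have hKmom2 := integrable_norm_pow_mul_abs_of_le hK hK3 (by norm_num : 2 ≤ 3)
  have hlin : ∫ t, K t * Df t = 0 := by
    have hKt := integrable_smul_of_norm_le_mul_norm_pow hKmom1 hKmeas aestronglyMeasurable_id
      (C := 1) fun u => by simp
    simpa [hKsym] using Df.integral_comp_comm hKt
  have hquad : ∫ t, K t * D2 t t = μ2 * lapl f x := by
    rw [integral_mul_apply_apply_self hKmeas hKmom2 hKiso, lapl_eq_sum_fderiv_fderiv
      (((hf.fderiv_right (m := 2) (by norm_num)).differentiable (by norm_num)) x)]
  have hfc := hf.continuous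
  have hIL : Integrable fun t => K t * Df t := by
    simpa using integrable_smul_of_norm_le_mul_norm_pow hKmom1 hKmeas
      Df.continuous.aestronglyMeasurable fun u => by simpa using Df.le_opNorm u
  have hIQ : Integrable fun t => K t * D2 t t := by
    simpa using integrable_smul_of_norm_le_mul_norm_pow hKmom2 hKmeas
      (by fun_prop : Continuous fun t => D2 t t).aestronglyMeasurable
      fun u => by simpa [sq, mul_assoc] using D2.le_opNorm₂ u u
  refine IsBigO.of_bound (C * ∫ t, ‖t‖ ^ 3 * |K t|) (Eventually.of_forall fun h => ?_)
  set R : EuclideanSpace ℝ (Fin d) → ℝ :=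
    fun t => f (x - h • t) - f x + h * Df t - h ^ 2 / 2 * D2 t t
  have hR : ∀ t, ‖R t‖ ≤ C * |h| ^ 3 * ‖t‖ ^ 3 := fun t => by
    have := norm_sub_sub_fderiv_apply_sub_fderiv_fderiv_apply_le hf hC x (-(h • t))
    simp only [← sub_eq_add_neg, map_neg, map_smul, neg_apply, smul_apply, smul_eq_mul,
      norm_neg, norm_smul, Real.norm_eq_abs] at this
    have hRt : R t = f (x - h • t) - f x - -(h * Df t) - 2⁻¹ * -(h * -(h * D2 t t)) := by
      simp only [R]; ring
    rw [Real.norm_eq_abs, hRt]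
    exact this.trans_eq (by ring)
  have hIR : Integrable fun t => K t * R t := by
    simpa using integrable_smul_of_norm_le_mul_norm_pow hK3 hKmeas
      (by fun_prop : Continuous fun t =>
        f (x - h • t) - f x + h * Df t - h ^ 2 / 2 * D2 t t).aestronglyMeasurable hR
  have hsplit :
      kernelSmoothing K f x h - (f x + h ^ 2 * (μ2 / 2 * lapl f x)) = ∫ t, K t * R t := by
    have hpt : ∀ t, K t * f (x - h • t) =
        K t * R t + f x * K t - h * (K t * Df t) + h ^ 2 / 2 * (K t * D2 t t) := fun t => by
      simp only [R]; ring
    rw [kernelSmoothing, integral_congr_ae (ae_of_all _ hpt), integral_add, integral_sub,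
      integral_add, integral_const_mul, integral_const_mul, integral_const_mul, hK1, hlin, hquad]
    · ring
    all_goals fun_prop
  rw [hsplit]
  calc ‖∫ t, K t * R t‖ ≤ ∫ t, C * |h| ^ 3 * (‖t‖ ^ 3 * |K t|) :=
        norm_integral_le_of_norm_le (hK3.const_mul _) (ae_of_all _ fun t => by
          rw [norm_mul, Real.norm_eq_abs]
          exact (mul_le_mul_of_nonneg_left (hR t) (abs_nonneg _)).trans_eq (by ring))
    _ = C * (∫ t, ‖t‖ ^ 3 * |K t|) * ‖h ^ 3‖ := by
        rw [integral_const_mul, norm_pow, Real.norm_eq_abs]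
        ring

end Euclidean

theorem nadaraya_watson_pointwise_bias_general
    {d : ℕ} (Kk : EuclideanSpace ℝ (Fin d) → ℝ)
    (hKint : Integrable Kk) (hK1 : (∫ u, Kk u) = 1)
    (hKsym : (∫ u, Kk u • u) = (0 : EuclideanSpace ℝ (Fin d)))
    (μ2 : ℝ)
    (hKiso : ∀ i j, (∫ u : EuclideanSpace ℝ (Fin d), u i * u j * Kk u)
      = if i = j then μ2 else 0)
    (hK3 : Integrable (fun u : EuclideanSpace ℝ (Fin d) => ‖u‖ ^ 3 * |Kk u|))
    (p m : EuclideanSpace ℝ (Fin d) → ℝ)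
    (hp : ContDiff ℝ 3 p)
    (hpb : ∀ n : ℕ, n ≤ 3 → ∃ C, ∀ y, ‖iteratedFDeriv ℝ n p y‖ ≤ C)
    (hm : ContDiff ℝ 3 m)
    (hmb : ∀ n : ℕ, n ≤ 3 → ∃ C, ∀ y, ‖iteratedFDeriv ℝ n m y‖ ≤ C)
    (x : EuclideanSpace ℝ (Fin d)) (hx : 0 < p x) :
    Tendsto (fun h : ℝ =>
        ((∫ t, Kk t * m (x - h • t) * p (x - h • t)) / (∫ t, Kk t * p (x - h • t))
          - m x) / h ^ 2)
      (nhdsWithin 0 (Set.Ioi 0))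
      (nhds ((μ2 / 2) *
        (lapl m x + 2 * (inner ℝ (gradient m x) (gradient p x) : ℝ) / p x))) := by
  obtain ⟨Cmp, hCmp⟩ := exists_bound_iteratedFDeriv_mul hm hp hmb hpb
  obtain ⟨Cp, hCp⟩ := hpb 3 le_rfl
  have hN := isBigO_kernelSmoothing_sub_lapl hKint hK1 hKsym hKiso hK3 (hm.mul hp) hCmp x
  have hB := isBigO_kernelSmoothing_sub_lapl hKint hK1 hKsym hKiso hK3 hp hCp x
  have hlim := tendsto_div_sub_div_sq_of_isBigO hN hB hx.ne' rfl
  rw [lapl_mul (hm.of_le (by norm_num)) (hp.of_le (by norm_num))] at hlim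
  have hpos : 𝓝[>] (0 : ℝ) ≤ 𝓝[≠] 0 := nhdsWithin_mono _ fun h (hh : 0 < h) => hh.ne'
  convert hlim.mono_left hpos using 2 with h
  · simp only [kernelSmoothing, mul_assoc]
  · rw [eq_div_iff hx.ne']
    field_simp
    ring

/-- **Pointwise bias of the Nadaraya–Watson kernel regressor.** For a kernel `K` with
`∫K = 1`, `∫ u K(u) du = 0`, `∫ u uᵀ K(u) du = μ₂ I_d`, and `∫ ‖u‖³|K(u)| du < ∞`,
a `C³` density `p` and regression function `m` with bounded derivatives up to order 3,
and any `x` with `p(x) > 0`: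
`h⁻²(∫K(t)m(x−ht)p(x−ht)dt / ∫K(t)p(x−ht)dt − m(x))
  → (μ₂/2)(Δm(x) + 2⟪∇m(x), ∇p(x)⟫/p(x))` as `h → 0⁺`. -/
theorem nadaraya_watson_pointwise_bias
    {d : ℕ} (Kk : EuclideanSpace ℝ (Fin d) → ℝ)
    (hKint : Integrable Kk) (hK1 : (∫ u, Kk u) = 1)
    (hKsym : (∫ u, Kk u • u) = (0 : EuclideanSpace ℝ (Fin d)))
    (μ2 : ℝ) (hμ2pos : 0 < μ2)
    (hKiso : ∀ i j, (∫ u : EuclideanSpace ℝ (Fin d), u i * u j * Kk u)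
      = if i = j then μ2 else 0)
    (hK3 : Integrable (fun u : EuclideanSpace ℝ (Fin d) => ‖u‖ ^ 3 * |Kk u|))
    (p m : EuclideanSpace ℝ (Fin d) → ℝ)
    (hp : ContDiff ℝ 3 p)
    (hpb : ∀ n : ℕ, n ≤ 3 → ∃ C, ∀ y, ‖iteratedFDeriv ℝ n p y‖ ≤ C)
    (hpnn : ∀ y, 0 ≤ p y) (hpint : (∫ y, p y) = 1)
    (hm : ContDiff ℝ 3 m)
    (hmb : ∀ n : ℕ, n ≤ 3 → ∃ C, ∀ y, ‖iteratedFDeriv ℝ n m y‖ ≤ C)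
    (x : EuclideanSpace ℝ (Fin d)) (hx : 0 < p x) :
    Tendsto (fun h : ℝ =>
        ((∫ t, Kk t * m (x - h • t) * p (x - h • t)) / (∫ t, Kk t * p (x - h • t))
          - m x) / h ^ 2)
      (nhdsWithin 0 (Set.Ioi 0))
      (nhds ((μ2 / 2) *
        (lapl m x + 2 * (inner ℝ (gradient m x) (gradient p x) : ℝ) / p x))) :=
  nadaraya_watson_pointwise_bias_general Kk hKint hK1 hKsym μ2 hKiso hK3 p m hp hpb hm hmb x hx
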